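/- In the setting of the previous bound, if for every i one has e_i² ≤ σ_i · (1/(4|𝒩_i|)) · Σ_{j∈𝒩_i} (x̂_i - x̂_j)² with σ_i ∈ (0,1), then V̇ ≤ Σ_{i=1}^N ((σ_i - 1)/4) Σ_{j∈𝒩_i}(x̂_i - x̂_j)², which is strictly negative whenever L x̂ ≠ 0. -/

import Mathlib

/-!
Write `S i = ∑_{j ∼ i} (x̂ᵢ - x̂ⱼ)²`. The quadratic form of the Laplacian is `x̂ᵀ L x̂ = ½ ∑ᵢ S i`,
and `(L x̂)ᵢ = ∑_{j ∼ i} (x̂ᵢ - x̂ⱼ)`, so Young's inequality `eᵢ (x̂ᵢ - x̂ⱼ) ≤ eᵢ² + ¼ (x̂ᵢ - x̂ⱼ)²`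
gives `eᵢ (L x̂)ᵢ ≤ |𝒩ᵢ| eᵢ² + ¼ S i ≤ ¼ (σᵢ + 1) S i` under the triggering rule.
Summing over `i` and subtracting `x̂ᵀ L x̂` gives the bound. If `L x̂ ≠ 0`, some edge `i ∼ j` has `x̂ᵢ ≠ x̂ⱼ`,
so `S i > 0` and the bound is strictly negative.
-/

open Matrix Finset

theorem mul_sq_le_of_sq_le_mul_one_div {d σ S a : ℝ} (hd : 0 ≤ d) (hσ : 0 ≤ σ) (hS : 0 ≤ S)
    (h : a ^ 2 ≤ σ * (1 / (4 * d)) * S) : d * a ^ 2 ≤ σ / 4 * S := by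
  rcases hd.eq_or_lt with rfl | hd
  · rw [zero_mul]
    positivity
  · calc d * a ^ 2 ≤ d * (σ * (1 / (4 * d)) * S) := mul_le_mul_of_nonneg_left h hd.le
      _ = σ / 4 * S := by field_simp

namespace SimpleGraph

variable {V : Type*} [Fintype V] (G : SimpleGraph V) [DecidableRel G.Adj]

def disagreement (x : V → ℝ) (i : V) : ℝ :=
  ∑ j ∈ G.neighborFinset i, (x i - x j) ^ 2

variable {G}

theorem disagreement_nonneg (x : V → ℝ) (i : V) : 0 ≤ G.disagreement x i :=
  sum_nonneg fun _ _ => sq_nonneg _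

theorem disagreement_pos_of_adj {x : V → ℝ} {i j : V} (hij : G.Adj i j) (hx : x i ≠ x j) :
    0 < G.disagreement x i :=
  sum_pos' (fun _ _ => sq_nonneg _)
    ⟨j, (G.mem_neighborFinset i j).mpr hij, sq_pos_iff.mpr (sub_ne_zero.mpr hx)⟩

variable [DecidableEq V]

theorem lapMatrix_mulVec_apply_eq_sum_sub {R : Type*} [NonAssocRing R] (x : V → R) (i : V) :
    (G.lapMatrix R *ᵥ x) i = ∑ j ∈ G.neighborFinset i, (x i - x j) := by
  rw [lapMatrix_mulVec_apply, sum_sub_distrib, sum_const, card_neighborFinset_eq_degree,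
    nsmul_eq_mul]

theorem dotProduct_lapMatrix_mulVec_self (x : V → ℝ) :
    x ⬝ᵥ (G.lapMatrix ℝ *ᵥ x) = (∑ i, G.disagreement x i) / 2 := by
  rw [← toLinearMap₂'_apply', lapMatrix_toLinearMap₂']
  simp only [disagreement, neighborFinset_eq_filter, sum_filter]

theorem mul_lapMatrix_mulVec_apply_le (x : V → ℝ) (a : ℝ) (i : V) :
    a * (G.lapMatrix ℝ *ᵥ x) i ≤ G.degree i * a ^ 2 + G.disagreement x i / 4 := by
  have young : ∀ j, a * (x i - x j) ≤ a ^ 2 + (x i - x j) ^ 2 / 4 := fun j => by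
    nlinarith [sq_nonneg (a - (x i - x j) / 2)]
  calc a * (G.lapMatrix ℝ *ᵥ x) i
      = ∑ j ∈ G.neighborFinset i, a * (x i - x j) := by
        rw [lapMatrix_mulVec_apply_eq_sum_sub, mul_sum]
    _ ≤ ∑ j ∈ G.neighborFinset i, (a ^ 2 + (x i - x j) ^ 2 / 4) := sum_le_sum fun j _ => young j
    _ = G.degree i * a ^ 2 + G.disagreement x i / 4 := by
        rw [sum_add_distrib, sum_const, card_neighborFinset_eq_degree, nsmul_eq_mul, ← sum_div,
          disagreement]

theorem neg_sub_dotProduct_lapMatrix_mulVec_le {x e σ : V → ℝ} (hσ : ∀ i, 0 ≤ σ i)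
    (herr : ∀ i, e i ^ 2 ≤ σ i * (1 / (4 * (G.degree i : ℝ))) * G.disagreement x i) :
    -((x - e) ⬝ᵥ (G.lapMatrix ℝ *ᵥ x)) ≤ ∑ i, (σ i - 1) / 4 * G.disagreement x i := by
  have hvertex (i : V) : e i * (G.lapMatrix ℝ *ᵥ x) i ≤ (σ i + 1) / 4 * G.disagreement x i := by
    have hdeg := mul_sq_le_of_sq_le_mul_one_div (Nat.cast_nonneg _) (hσ i)
      (disagreement_nonneg x i) (herr i)
    linarith [mul_lapMatrix_mulVec_apply_le (G := G) x (e i) i]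
  have hsum : e ⬝ᵥ (G.lapMatrix ℝ *ᵥ x) ≤ ∑ i, (σ i + 1) / 4 * G.disagreement x i :=
    sum_le_sum fun i _ => hvertex i
  have hsplit : ∑ i, (σ i - 1) / 4 * G.disagreement x i
      = ∑ i, (σ i + 1) / 4 * G.disagreement x i - (∑ i, G.disagreement x i) / 2 := by
    rw [sum_div, ← sum_sub_distrib]
    exact sum_congr rfl fun i _ => by ring
  rw [sub_dotProduct, dotProduct_lapMatrix_mulVec_self, hsplit]
  linarith

end SimpleGraph

theorem decentralized_trigger_decrease_general {N : ℕ}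
    (G : SimpleGraph (Fin N)) [DecidableRel G.Adj]
    (xhat e : Fin N → ℝ) (σ : Fin N → ℝ) (hσ : ∀ i, σ i ∈ Set.Ioo (0 : ℝ) 1)
    (herr : ∀ i, e i ^ 2 ≤
      σ i * (1 / (4 * (G.degree i : ℝ))) * ∑ j ∈ G.neighborFinset i, (xhat i - xhat j) ^ 2) :
    -((xhat - e) ⬝ᵥ ((G.lapMatrix ℝ) *ᵥ xhat)) ≤
      ∑ i, ((σ i - 1) / 4) * ∑ j ∈ G.neighborFinset i, (xhat i - xhat j) ^ 2 ∧
    ((G.lapMatrix ℝ) *ᵥ xhat ≠ 0 →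
      -((xhat - e) ⬝ᵥ ((G.lapMatrix ℝ) *ᵥ xhat)) < 0) := by
  have hbound := G.neg_sub_dotProduct_lapMatrix_mulVec_le (fun i => (hσ i).1.le) herr
  refine ⟨hbound, fun hne => hbound.trans_lt (sum_neg' ?_ ?_)⟩
  · exact fun i _ => mul_nonpos_of_nonpos_of_nonneg (by linarith [(hσ i).2])
      (G.disagreement_nonneg xhat i)
  · obtain ⟨i, j, hij, hx⟩ : ∃ i j, G.Adj i j ∧ xhat i ≠ xhat j := by
      simpa [SimpleGraph.lapMatrix_mulVec_eq_zero_iff_forall_adj] using hne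
    exact ⟨i, mem_univ i, mul_neg_of_neg_of_pos (by linarith [(hσ i).2])
      (SimpleGraph.disagreement_pos_of_adj hij hx)⟩

/-- If each agent's error satisfies
    `eᵢ² ≤ σᵢ (1/(4|𝒩ᵢ|)) Σ_{j∈𝒩ᵢ} (x̂ᵢ - x̂ⱼ)²` with `σᵢ ∈ (0,1)`, then
    `V̇ = -(x̂-e)ᵀ L x̂ ≤ Σᵢ ((σᵢ-1)/4) Σ_{j∈𝒩ᵢ} (x̂ᵢ - x̂ⱼ)²`, which is
    strictly negative whenever `L x̂ ≠ 0`. -/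
theorem decentralized_trigger_decrease {N : ℕ}
    (G : SimpleGraph (Fin N)) [DecidableRel G.Adj] (hconn : G.Connected)
    (hdeg : ∀ i, 0 < G.degree i)
    (xhat e : Fin N → ℝ) (σ : Fin N → ℝ) (hσ : ∀ i, σ i ∈ Set.Ioo (0 : ℝ) 1)
    (herr : ∀ i, e i ^ 2 ≤
      σ i * (1 / (4 * (G.degree i : ℝ))) * ∑ j ∈ G.neighborFinset i, (xhat i - xhat j) ^ 2) :
    -((xhat - e) ⬝ᵥ ((G.lapMatrix ℝ) *ᵥ xhat)) ≤
      ∑ i, ((σ i - 1) / 4) * ∑ j ∈ G.neighborFinset i, (xhat i - xhat j) ^ 2 ∧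
    ((G.lapMatrix ℝ) *ᵥ xhat ≠ 0 →
      -((xhat - e) ⬝ᵥ ((G.lapMatrix ℝ) *ᵥ xhat)) < 0) :=
  decentralized_trigger_decrease_general G xhat e σ hσ herr
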